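/- arXiv:1603.04841 — 2 statements merged into one kernel-verified Lean document; each statement's English description precedes it below -/
import Mathlib

section
/- Let $h : \mathbb{R} \to \mathbb{R}$ be an even twice differentiable function whose second derivative is convex, and let $b \ge 0$. Then the function $g_{b,h} : \mathbb{R} \to \mathbb{R}$ defined by $g_{b,h}(u) := h\big(\sqrt{u^2+b}\big)$ is also even, twice differentiable, and has convex second derivative. -/
/-!
Write `H = h'`, `f = h''` and `s = √(u² + b)`. Then `g'' = f(s) u²/s² + H(s) b/s³`, which equals
`Φ(s)` for `Φ(y) = f(y) - b (y f(y) - H(y)) / y³`. Since `s'' = b/s³`, the second derivative of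
`Φ ∘ s` has the same shape, `Φ''(s) u²/s² + Φ'(s) b/s³`, and when `f` is `C²` its numerator is
nonnegative because `f'' ≥ 0`, `f'(y) ≥ 0` for `y ≥ 0`, and `0 ≤ y f(y) - H(y) ≤ y² f'(y)/2`.
A general convex even `f` is the pointwise limit of its double moving averages, which are `C²`,
convex and even, and convexity passes to pointwise limits. For `b = 0`, `g = h`.
-/

open Real

noncomputable section

open Filter Set Topology intervalIntegral

theorem ConvexOn.of_tendsto {E ι : Type*} [AddCommMonoid E] [Module ℝ E] {s : Set E}
    {l : Filter ι} [l.NeBot] {F : ι → E → ℝ} {g : E → ℝ} (hF : ∀ᶠ i in l, ConvexOn ℝ s (F i))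
    (hs : Convex ℝ s) (hlim : ∀ x ∈ s, Tendsto (fun i => F i x) l (𝓝 (g x))) :
    ConvexOn ℝ s g :=
  ⟨hs, fun x hx y hy a c ha hc hac => le_of_tendsto_of_tendsto (hlim _ (hs hx hy ha hc hac))
    (((hlim x hx).const_smul a).add ((hlim y hy).const_smul c))
    (hF.mono fun _ hi => hi.2 hx hy ha hc hac)⟩

theorem Function.Even.deriv {f : ℝ → ℝ} (hf : f.Even) : (deriv f).Odd := fun x => by
  simpa [funext hf] using deriv_comp_neg f (-x)

theorem Function.Odd.deriv {f : ℝ → ℝ} (hf : f.Odd) : (deriv f).Even := fun x => by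
  simpa [funext hf] using deriv_comp_neg f (-x)

def movingAverage (ε : ℝ) (φ : ℝ → ℝ) (x : ℝ) : ℝ :=
  (∫ t in (x - ε)..(x + ε), φ t) / (2 * ε)

theorem Function.Even.movingAverage {ε : ℝ} {φ : ℝ → ℝ} (hφ : φ.Even) :
    (movingAverage ε φ).Even := fun x => by
  change (∫ t in (-x - ε)..(-x + ε), φ t) / (2 * ε) = (∫ t in (x - ε)..(x + ε), φ t) / (2 * ε)
  rw [show -x - ε = -(x + ε) by ring, show -x + ε = -(x - ε) by ring, ← integral_comp_neg]
  simp only [hφ _]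

namespace movingAverage

variable {ε : ℝ} {φ : ℝ → ℝ}

theorem eq_of_hasDerivAt {Φ : ℝ → ℝ} (hΦ : ∀ x, HasDerivAt Φ (φ x) x) (hφ : Continuous φ)
    (x : ℝ) : movingAverage ε φ x = (Φ (x + ε) - Φ (x - ε)) / (2 * ε) := by
  rw [movingAverage, integral_eq_sub_of_hasDerivAt (fun t _ => hΦ t) (hφ.intervalIntegrable _ _)]

theorem hasDerivAt (hφ : Continuous φ) (x : ℝ) :
    HasDerivAt (movingAverage ε φ) ((φ (x + ε) - φ (x - ε)) / (2 * ε)) x := by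
  have hΦ : ∀ y, HasDerivAt (fun y => ∫ t in (0 : ℝ)..y, φ t) (φ y) y := fun y =>
    (hφ.integral_hasStrictDerivAt 0 y).hasDerivAt
  rw [funext (eq_of_hasDerivAt hΦ hφ)]
  exact (((hΦ _).comp_add_const x ε).sub ((hΦ _).comp_sub_const x ε)).div_const _

theorem hasDerivAt_of_hasDerivAt {Φ : ℝ → ℝ} (hΦ : ∀ x, HasDerivAt Φ (φ x) x)
    (hφ : Continuous φ) (x : ℝ) :
    HasDerivAt (movingAverage ε Φ) (movingAverage ε φ x) x := by
  rw [eq_of_hasDerivAt hΦ hφ]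
  exact hasDerivAt (continuous_iff_continuousAt.2 fun y => (hΦ y).continuousAt) x

theorem differentiable (hφ : Continuous φ) : Differentiable ℝ (movingAverage ε φ) :=
  fun x => (hasDerivAt hφ x).differentiableAt

theorem continuous (hφ : Continuous φ) : Continuous (movingAverage ε φ) :=
  (differentiable hφ).continuous

theorem differentiable_deriv (hφ : Differentiable ℝ φ) :
    Differentiable ℝ (deriv (movingAverage ε φ)) := by
  rw [show deriv (movingAverage ε φ) = fun x => (φ (x + ε) - φ (x - ε)) / (2 * ε) from
    funext fun x => (hasDerivAt hφ.continuous x).deriv]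
  fun_prop

theorem eq_integral_comp_add_left (x : ℝ) :
    movingAverage ε φ x = (∫ t in (-ε)..ε, φ (x + t)) / (2 * ε) := by
  rw [movingAverage, integral_comp_add_left]
  ring_nf

theorem abs_sub_le_of_forall_mem_Icc {x c δ : ℝ} (hφ : Continuous φ) (hε : 0 < ε)
    (h : ∀ t ∈ Icc (x - ε) (x + ε), |φ t - c| ≤ δ) : |movingAverage ε φ x - c| ≤ δ := by
  have hlen : (x + ε) - (x - ε) = 2 * ε := by ring
  have h2ε : 0 < 2 * ε := by linarith
  have hsub : ∫ t in (x - ε)..(x + ε), (φ t - c)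
      = (∫ t in (x - ε)..(x + ε), φ t) - 2 * ε * c := by
    rw [integral_sub (hφ.intervalIntegrable _ _) intervalIntegrable_const, integral_const, hlen,
      smul_eq_mul]
  have hbound : ‖∫ t in (x - ε)..(x + ε), (φ t - c)‖ ≤ δ * |(x + ε) - (x - ε)| := by
    refine norm_integral_le_of_norm_le_const fun t ht => h t (Ioc_subset_Icc_self ?_)
    rwa [uIoc_of_le (by linarith)] at ht
  rw [Real.norm_eq_abs, hlen, abs_of_pos h2ε, hsub] at hbound
  rw [movingAverage, div_sub' h2ε.ne', abs_div, abs_of_pos h2ε, div_le_iff₀ h2ε]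
  linarith

theorem tendsto_movingAverage (hφ : Continuous φ) (x : ℝ) :
    Tendsto (fun ε => movingAverage ε (movingAverage ε φ) x) (𝓝[>] 0) (𝓝 (φ x)) := by
  rw [Metric.tendsto_nhdsWithin_nhds]
  intro δ hδ
  obtain ⟨η, hη, hφη⟩ := Metric.continuousAt_iff.1 hφ.continuousAt (δ / 2) (half_pos hδ)
  refine ⟨η / 2, half_pos hη, fun ε (hε : 0 < ε) hεη => ?_⟩
  rw [Real.dist_eq, sub_zero, abs_of_pos hε] at hεη
  rw [Real.dist_eq]
  refine lt_of_le_of_lt (abs_sub_le_of_forall_mem_Icc (continuous hφ) hε fun y hy => ?_)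
    (half_lt_self hδ)
  refine abs_sub_le_of_forall_mem_Icc hφ hε fun t ht => (hφη ?_).le
  rw [Real.dist_eq, abs_lt]
  constructor <;> linarith [hy.1, hy.2, ht.1, ht.2]

end movingAverage

theorem ConvexOn.movingAverage {ε : ℝ} {φ : ℝ → ℝ} (hφ : ConvexOn ℝ univ φ) (hε : 0 < ε) :
    ConvexOn ℝ univ (movingAverage ε φ) := by
  have hφc : Continuous φ := continuousOn_univ.1 (hφ.continuousOn isOpen_univ)
  have hint (z : ℝ) : IntervalIntegrable (fun t => φ (z + t)) MeasureTheory.volume (-ε) ε :=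
    (hφc.comp (continuous_const_add z)).intervalIntegrable _ _
  refine ⟨convex_univ, fun x _ y _ a c ha hc hac => ?_⟩
  simp only [smul_eq_mul, movingAverage.eq_integral_comp_add_left, mul_div_assoc', ← add_div,
    ← integral_const_mul, ← integral_add ((hint x).const_mul a) ((hint y).const_mul c)]
  gcongr
  refine integral_mono_on (by linarith) (hint _) (((hint x).const_mul a).add
    ((hint y).const_mul c)) fun t _ => ?_
  have key := hφ.2 (mem_univ (x + t)) (mem_univ (y + t)) ha hc hac
  simp only [smul_eq_mul] at key
  rwa [show a * (x + t) + c * (y + t) = a * x + c * y + t by linear_combination t * hac] at key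

/-- The second derivative of `u ↦ h (√(u ^ 2 + b))` when `H = h'` and `f = h''`. -/
def compSqrtDeriv2 (b : ℝ) (H f : ℝ → ℝ) (u : ℝ) : ℝ :=
  f (√(u ^ 2 + b)) * u ^ 2 / (u ^ 2 + b) + H (√(u ^ 2 + b)) * b / ((u ^ 2 + b) * √(u ^ 2 + b))

section CompSqrt

variable {b u : ℝ}

theorem hasDerivAt_sqrt_sq_add (hu : 0 < u ^ 2 + b) :
    HasDerivAt (fun v => √(v ^ 2 + b)) (u / √(u ^ 2 + b)) u := by
  convert ((hasDerivAt_pow 2 u).add_const b).sqrt hu.ne' using 1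
  field_simp
  ring

theorem HasDerivAt.comp_sqrt_sq_add {ψ : ℝ → ℝ} {ψ' : ℝ} (hu : 0 < u ^ 2 + b)
    (hψ : HasDerivAt ψ ψ' (√(u ^ 2 + b))) :
    HasDerivAt (fun v => ψ (√(v ^ 2 + b))) (ψ' * (u / √(u ^ 2 + b))) u :=
  hψ.comp u (hasDerivAt_sqrt_sq_add hu)

theorem hasDerivAt_comp_sqrt_mul_div {H f : ℝ → ℝ} (hu : 0 < u ^ 2 + b)
    (hH : HasDerivAt H (f (√(u ^ 2 + b))) (√(u ^ 2 + b))) :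
    HasDerivAt (fun v => H (√(v ^ 2 + b)) * (v / √(v ^ 2 + b))) (compSqrtDeriv2 b H f u) u := by
  have hs := hasDerivAt_sqrt_sq_add hu
  have hs0 : 0 < √(u ^ 2 + b) := sqrt_pos.2 hu
  refine ((hH.comp_sqrt_sq_add hu).fun_mul
    ((hasDerivAt_id' u).fun_div hs hs0.ne')).congr_deriv ?_
  unfold compSqrtDeriv2
  have hs2 : √(u ^ 2 + b) ^ 2 = u ^ 2 + b := sq_sqrt hu.le
  set s := √(u ^ 2 + b)
  rw [← hs2, show b = s ^ 2 - u ^ 2 by linarith]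
  field_simp

end CompSqrt

/-- `compSqrtDeriv2 b H f u` as a function of `y = √(u ^ 2 + b)`; the next two definitions are
its first two derivatives when `H' = f`, `f' = p`, `p' = q`. -/
def compSqrtProfile (b : ℝ) (H f : ℝ → ℝ) (y : ℝ) : ℝ :=
  f y - b * (y * f y - H y) / y ^ 3

def compSqrtProfileDeriv (b : ℝ) (H f p : ℝ → ℝ) (y : ℝ) : ℝ :=
  p y * (y ^ 2 - b) / y ^ 2 + 3 * b * (y * f y - H y) / y ^ 4

def compSqrtProfileDeriv2 (b : ℝ) (H f p q : ℝ → ℝ) (y : ℝ) : ℝ :=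
  q y * (y ^ 2 - b) / y ^ 2 + 5 * b * p y / y ^ 3 - 12 * b * (y * f y - H y) / y ^ 5

section Profile

variable {b y : ℝ} {H f p q : ℝ → ℝ}

theorem compSqrtDeriv2_eq_compSqrtProfile (u : ℝ) (hu : 0 < u ^ 2 + b) :
    compSqrtDeriv2 b H f u = compSqrtProfile b H f (√(u ^ 2 + b)) := by
  unfold compSqrtDeriv2 compSqrtProfile
  have hs2 : √(u ^ 2 + b) ^ 2 = u ^ 2 + b := sq_sqrt hu.le
  have hs0 : 0 < √(u ^ 2 + b) := sqrt_pos.2 hu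
  set s := √(u ^ 2 + b)
  rw [← hs2, show u ^ 2 = s ^ 2 - b by linarith]
  field_simp
  ring

theorem hasDerivAt_compSqrtProfile (hH : HasDerivAt H (f y) y) (hf : HasDerivAt f (p y) y)
    (hy : y ≠ 0) : HasDerivAt (compSqrtProfile b H f) (compSqrtProfileDeriv b H f p y) y := by
  have hK := ((hasDerivAt_id' y).fun_mul hf).fun_sub hH
  refine (hf.sub ((hK.const_mul b).fun_div (hasDerivAt_pow 3 y)
    (pow_ne_zero 3 hy))).congr_deriv ?_
  unfold compSqrtProfileDeriv
  field_simp
  ring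

theorem hasDerivAt_compSqrtProfileDeriv (hH : HasDerivAt H (f y) y) (hf : HasDerivAt f (p y) y)
    (hp : HasDerivAt p (q y) y) (hy : y ≠ 0) :
    HasDerivAt (compSqrtProfileDeriv b H f p) (compSqrtProfileDeriv2 b H f p q y) y := by
  have hK := ((hasDerivAt_id' y).fun_mul hf).fun_sub hH
  have h1 := (hp.fun_mul ((hasDerivAt_pow 2 y).sub_const b)).fun_div (hasDerivAt_pow 2 y)
    (pow_ne_zero 2 hy)
  have h2 := (hK.const_mul (3 * b)).fun_div (hasDerivAt_pow 4 y) (pow_ne_zero 4 hy)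
  refine (h1.add h2).congr_deriv ?_
  unfold compSqrtProfileDeriv2
  field_simp
  ring

theorem compSqrtDeriv2_compSqrtProfileDeriv_nonneg {u : ℝ} (hb : 0 ≤ b) (hu : 0 < u ^ 2 + b)
    (hp : 0 ≤ p (√(u ^ 2 + b))) (hq : 0 ≤ q (√(u ^ 2 + b)))
    (hK : 0 ≤ √(u ^ 2 + b) * f (√(u ^ 2 + b)) - H (√(u ^ 2 + b)))
    (hKp : √(u ^ 2 + b) * f (√(u ^ 2 + b)) - H (√(u ^ 2 + b))
      ≤ √(u ^ 2 + b) ^ 2 * p (√(u ^ 2 + b)) / 2) :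
    0 ≤ compSqrtDeriv2 b (compSqrtProfileDeriv b H f p) (compSqrtProfileDeriv2 b H f p q) u := by
  unfold compSqrtDeriv2 compSqrtProfileDeriv compSqrtProfileDeriv2
  have hy2 : √(u ^ 2 + b) ^ 2 = u ^ 2 + b := sq_sqrt hu.le
  have hy : 0 < √(u ^ 2 + b) := sqrt_pos.2 hu
  set y := √(u ^ 2 + b)
  set K := y * f y - H y
  clear_value y K
  have hby : b ≤ y ^ 2 := by nlinarith
  rw [← hy2, show u ^ 2 = y ^ 2 - b by linarith]
  have hnum : 0 ≤ q y * (y ^ 2 - b) ^ 2 * y ^ 3 + 6 * b * p y * (y ^ 2 - b) * y ^ 2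
      + 3 * b * K * (5 * b - 4 * y ^ 2) := by
    have h1 : 0 ≤ q y * (y ^ 2 - b) ^ 2 * y ^ 3 := by positivity
    have h2 : 0 ≤ b * p y * (y ^ 2 - b) * y ^ 2 := by
      have := sub_nonneg.2 hby; positivity
    -- when `4 y² > 5 b` the last term is negative and is absorbed using `K ≤ y² p / 2`
    rcases le_total (4 * y ^ 2) (5 * b) with h | h
    · have : 0 ≤ b * K * (5 * b - 4 * y ^ 2) := by
        have := sub_nonneg.2 h; positivity
      linarith
    · have h3 : 3 * b * (y ^ 2 * p y / 2) * (5 * b - 4 * y ^ 2)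
          ≤ 3 * b * K * (5 * b - 4 * y ^ 2) :=
        mul_le_mul_of_nonpos_right (by gcongr) (by linarith)
      nlinarith [mul_nonneg (mul_nonneg (sq_nonneg b) hp) (sq_nonneg y)]
  refine (div_nonneg hnum (pow_nonneg hy.le 7)).trans_eq ?_
  field_simp
  ring

theorem mul_sub_bounds_of_hasDerivAt (hH : ∀ x, HasDerivAt H (f x) x)
    (hf : ∀ x, HasDerivAt f (p x) x) (hp : ∀ x, HasDerivAt p (q x) x) (hq : 0 ≤ q)
    (hH0 : H 0 = 0) (hp0 : p 0 = 0) (hy : 0 ≤ y) :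
    0 ≤ y * f y - H y ∧ y * f y - H y ≤ y ^ 2 * p y / 2 := by
  have hxp (x : ℝ) : 0 ≤ x * p x := by
    have hpm := monotone_of_hasDerivAt_nonneg hp hq
    rcases le_total 0 x with hx | hx
    · exact mul_nonneg hx (hp0 ▸ hpm hx)
    · exact mul_nonneg_of_nonpos_of_nonpos hx (hp0 ▸ hpm hx)
  have hK (x : ℝ) : HasDerivAt (fun x => x * f x - H x) (x * p x) x :=
    (((hasDerivAt_id' x).fun_mul (hf x)).fun_sub (hH x)).congr_deriv (by ring)
  have hD (x : ℝ) :
      HasDerivAt (fun x => x ^ 2 * p x / 2 - (x * f x - H x)) (x ^ 2 * q x / 2) x :=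
    ((((hasDerivAt_pow 2 x).fun_mul (hp x)).div_const 2).fun_sub (hK x)).congr_deriv (by ring)
  constructor
  · simpa [hH0] using monotone_of_hasDerivAt_nonneg hK hxp hy
  · simpa [hH0, sub_nonneg] using monotone_of_hasDerivAt_nonneg hD
      (fun x => div_nonneg (mul_nonneg (sq_nonneg x) (hq x)) zero_le_two) hy

end Profile

section Convexity

variable {b : ℝ} {H f : ℝ → ℝ}

theorem convexOn_compSqrtDeriv2_of_differentiable (hb : 0 < b) (hH : ∀ x, HasDerivAt H (f x) x)
    (hH0 : H 0 = 0) (hconv : ConvexOn ℝ univ f) (heven : f.Even) (hf : Differentiable ℝ f)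
    (hf' : Differentiable ℝ (deriv f)) : ConvexOn ℝ univ (compSqrtDeriv2 b H f) := by
  set p := deriv f
  set q := deriv p
  have hfp (x : ℝ) : HasDerivAt f (p x) x := (hf x).hasDerivAt
  have hpq (x : ℝ) : HasDerivAt p (q x) x := (hf' x).hasDerivAt
  have hq : 0 ≤ q := fun _ =>
    (monotoneOn_univ.1 (hconv.monotoneOn_deriv fun x _ => hf x)).deriv_nonneg
  have hp0 : p 0 = 0 := heven.deriv.map_zero
  have hu (u : ℝ) : 0 < u ^ 2 + b := by positivity
  have hs (u : ℝ) : 0 < √(u ^ 2 + b) := sqrt_pos.2 (hu u)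
  have hΦ (u : ℝ) := (hasDerivAt_compSqrtProfile (b := b) (hH _) (hfp _)
    (hs u).ne').comp_sqrt_sq_add (hu u)
  rw [show compSqrtDeriv2 b H f = fun u => compSqrtProfile b H f (√(u ^ 2 + b)) from
    funext fun u => compSqrtDeriv2_eq_compSqrtProfile u (hu u)]
  refine convexOn_of_hasDerivWithinAt2_nonneg convex_univ
    (continuous_iff_continuousAt.2 fun u => (hΦ u).continuousAt).continuousOn
    (fun u _ => (hΦ u).hasDerivWithinAt)
    (fun u _ => (hasDerivAt_comp_sqrt_mul_div (hu u)
      (hasDerivAt_compSqrtProfileDeriv (hH _) (hfp _) (hpq _) (hs u).ne')).hasDerivWithinAt)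
    fun u _ => ?_
  obtain ⟨hK, hKp⟩ := mul_sub_bounds_of_hasDerivAt hH hfp hpq hq hH0 hp0 (hs u).le
  exact compSqrtDeriv2_compSqrtProfileDeriv_nonneg hb.le (hu u)
    (hp0 ▸ monotone_of_hasDerivAt_nonneg hpq hq (hs u).le) (hq _) hK hKp

theorem convexOn_compSqrtDeriv2 (hb : 0 < b) (hH : ∀ x, HasDerivAt H (f x) x) (hH0 : H 0 = 0)
    (hconv : ConvexOn ℝ univ f) (heven : f.Even) : ConvexOn ℝ univ (compSqrtDeriv2 b H f) := by
  have hfc : Continuous f := continuousOn_univ.1 (hconv.continuousOn isOpen_univ)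
  have hHc : Continuous H := continuous_iff_continuousAt.2 fun x => (hH x).continuousAt
  set A : ℝ → (ℝ → ℝ) → ℝ → ℝ := fun ε ψ => movingAverage ε (movingAverage ε ψ)
  have hA (ε x : ℝ) : HasDerivAt (fun y => A ε H y - A ε H 0) (A ε f x) x :=
    (movingAverage.hasDerivAt_of_hasDerivAt (movingAverage.hasDerivAt_of_hasDerivAt hH hfc)
      (movingAverage.continuous hfc) x).sub_const _
  refine ConvexOn.of_tendsto (l := 𝓝[>] 0)
    (F := fun ε => compSqrtDeriv2 b (fun y => A ε H y - A ε H 0) (A ε f)) ?_ convex_univ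
    fun u _ => ?_
  · filter_upwards [self_mem_nhdsWithin] with ε (hε : 0 < ε)
    exact convexOn_compSqrtDeriv2_of_differentiable hb (hA ε) (sub_self _)
      ((hconv.movingAverage hε).movingAverage hε) heven.movingAverage.movingAverage
      (movingAverage.differentiable (movingAverage.continuous hfc))
      (movingAverage.differentiable_deriv (movingAverage.differentiable hfc))
  · have hHlim := (movingAverage.tendsto_movingAverage hHc (√(u ^ 2 + b))).sub
      (movingAverage.tendsto_movingAverage hHc 0)
    rw [hH0, sub_zero] at hHlim
    exact (((movingAverage.tendsto_movingAverage hfc _).mul_const _).div_const _).add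
      ((hHlim.mul_const _).div_const _)

end Convexity

/-- the class of even twice differentiable functions with convex second
derivative is closed under `h ↦ (u ↦ h(√(u² + b)))` for `b ≥ 0`. -/
theorem classC_closed_under_g (h : ℝ → ℝ)
    (heven : ∀ x, h (-x) = h x)
    (hdiff : Differentiable ℝ h) (hdiff2 : Differentiable ℝ (deriv h))
    (hconv : ConvexOn ℝ Set.univ (deriv (deriv h)))
    (b : ℝ) (hb : 0 ≤ b) :
    (∀ x, h (Real.sqrt ((-x) ^ 2 + b)) = h (Real.sqrt (x ^ 2 + b))) ∧
      Differentiable ℝ (fun u => h (Real.sqrt (u ^ 2 + b))) ∧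
      Differentiable ℝ (deriv (fun u => h (Real.sqrt (u ^ 2 + b)))) ∧
      ConvexOn ℝ Set.univ (deriv (deriv (fun u => h (Real.sqrt (u ^ 2 + b))))) := by
  have hsymm (x : ℝ) : h (√((-x) ^ 2 + b)) = h (√(x ^ 2 + b)) := by rw [neg_sq]
  rcases hb.eq_or_lt with rfl | hb
  · have hg : (fun u => h (√(u ^ 2 + 0))) = h := funext fun u => by
      rw [add_zero, sqrt_sq_eq_abs]
      rcases abs_choice u with hu | hu <;> rw [hu]
      exact heven u
    rw [hg]
    exact ⟨hsymm, hdiff, hdiff2, hconv⟩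
  have hu (u : ℝ) : 0 < u ^ 2 + b := by positivity
  have hg' (u : ℝ) := (hdiff _).hasDerivAt.comp_sqrt_sq_add (hu u)
  have hg'' (u : ℝ) : HasDerivAt (deriv fun u => h (√(u ^ 2 + b)))
      (compSqrtDeriv2 b (deriv h) (deriv (deriv h)) u) u := by
    rw [funext fun u => (hg' u).deriv]
    exact hasDerivAt_comp_sqrt_mul_div (hu u) (hdiff2 _).hasDerivAt
  refine ⟨hsymm, fun u => (hg' u).differentiableAt, fun u => (hg'' u).differentiableAt, ?_⟩
  rw [funext fun u => (hg'' u).deriv]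
  exact convexOn_compSqrtDeriv2 hb (fun x => (hdiff2 x).hasDerivAt)
    (Function.Even.deriv heven).map_zero hconv (Function.Even.deriv heven).deriv
end
end

section
/- Let $g : \mathbb{R} \to \mathbb{R}$ be an even twice differentiable function with convex second derivative, let $\varepsilon$ be a Rademacher random variable, and let $\beta \in \mathbb{R}$. Then the function $t \mapsto \mathsf{E}\,g(\beta + \varepsilon\sqrt{t})$ is convex on $(0,\infty)$. -/
open Real

noncomputable section

/-!
Writing `s = √t`, the derivative of `t ↦ (g (β + √t) + g (β - √t)) / 2` is
`(g' (β + s) - g' (β - s)) / (4 s) = (1 / 4) ∫_{-1}^{1} g'' (β + s u) du`. Averages of a convex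
function over symmetric intervals `[β - s, β + s]` grow with `s`, since `β + s u` is a convex
combination of `β ± r u` for `s ≤ r`; hence the derivative is monotone in `t`.
-/

open Set intervalIntegral

theorem Convex.convexOn_of_hasDerivAt_of_monotoneOn {D : Set ℝ} (hD : Convex ℝ D)
    (hDo : IsOpen D) {f f' : ℝ → ℝ} (hf : ∀ x ∈ D, HasDerivAt f (f' x) x)
    (hf' : MonotoneOn f' D) : ConvexOn ℝ D f := by
  refine MonotoneOn.convexOn_of_deriv hD
    (fun x hx => (hf x hx).continuousAt.continuousWithinAt) ?_ ?_ <;> rw [hDo.interior_eq]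
  · exact fun x hx => (hf x hx).differentiableAt.differentiableWithinAt
  · exact hf'.congr fun x hx => ((hf x hx).deriv).symm

theorem ConvexOn.monotoneOn_integral_comp_add_mul {φ : ℝ → ℝ} (hφ : ConvexOn ℝ univ φ) (β : ℝ) :
    MonotoneOn (fun s => ∫ u in (-1 : ℝ)..1, φ (β + s * u)) (Ici 0) := by
  intro s (hs : 0 ≤ s) r _ hsr
  have hφc : Continuous φ := continuousOn_univ.mp (hφ.continuousOn isOpen_univ)
  have hint : ∀ a, IntervalIntegrable (fun u => φ (β + a * u)) MeasureTheory.volume (-1) 1 :=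
    fun a => (hφc.comp (by fun_prop)).intervalIntegrable _ _
  set c : ℝ := (1 + s / r) / 2 with hc_def
  have hc : 0 ≤ c ∧ c ≤ 1 := by
    have := div_nonneg hs (hs.trans hsr)
    have := div_le_one_of_le₀ hsr (hs.trans hsr)
    constructor <;> linarith
  -- `β + s u` is the convex combination `c (β + r u) + (1 - c) (β - r u)`
  have hpt : ∀ u : ℝ, φ (β + s * u) ≤ c * φ (β + r * u) + (1 - c) * φ (β + -r * u) := by
    intro u
    have hcomb : c * (β + r * u) + (1 - c) * (β + -r * u) = β + s * u := by
      have : s / r * r = s := div_mul_cancel_of_imp fun h => le_antisymm (h ▸ hsr) hs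
      linear_combination u * this
    have := hφ.2 (mem_univ (β + r * u)) (mem_univ (β + -r * u))
      hc.1 (sub_nonneg.2 hc.2) (by ring)
    simpa only [smul_eq_mul, hcomb] using this
  have hreflect : ∫ u in (-1 : ℝ)..1, φ (β + -r * u) = ∫ u in (-1 : ℝ)..1, φ (β + r * u) := by
    simpa only [neg_mul, mul_neg, neg_neg] using integral_comp_neg (a := -1) (b := 1)
      fun u => φ (β + r * u)
  calc ∫ u in (-1 : ℝ)..1, φ (β + s * u)
      ≤ ∫ u in (-1 : ℝ)..1, (c * φ (β + r * u) + (1 - c) * φ (β + -r * u)) :=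
        integral_mono_on (by norm_num) (hint s)
          (((hint r).const_mul c).add ((hint (-r)).const_mul _)) fun u _ => hpt u
    _ = ∫ u in (-1 : ℝ)..1, φ (β + r * u) := by
        rw [integral_add ((hint r).const_mul c) ((hint (-r)).const_mul _),
          integral_const_mul, integral_const_mul, hreflect]
        ring

theorem sub_eq_mul_integral_deriv_comp_add_mul {f : ℝ → ℝ} (hf : Differentiable ℝ f)
    (hf' : Continuous (deriv f)) (β s : ℝ) :
    f (β + s) - f (β - s) = s * ∫ u in (-1 : ℝ)..1, deriv f (β + s * u) := by
  rw [← smul_eq_mul, smul_integral_comp_add_mul, mul_neg_one, mul_one, ← sub_eq_add_neg,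
    integral_deriv_eq_sub (fun x _ => hf x) (hf'.intervalIntegrable _ _)]

theorem hasDerivAt_sqrt_symmetric_average {g : ℝ → ℝ} (hg : Differentiable ℝ g) (β : ℝ)
    {t : ℝ} (ht : 0 < t) :
    HasDerivAt (fun t => (g (β + √t) + g (β - √t)) / 2)
      ((deriv g (β + √t) - deriv g (β - √t)) / (4 * √t)) t := by
  have hsqrt := hasDerivAt_sqrt ht.ne'
  have hplus := (hg (β + √t)).hasDerivAt.comp t (hsqrt.const_add β)
  have hminus := (hg (β - √t)).hasDerivAt.comp t (hsqrt.const_sub β)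
  refine ((hplus.add hminus).div_const 2).congr_deriv ?_
  have : √t ≠ 0 := (sqrt_pos.2 ht).ne'
  field_simp
  ring

theorem rademacher_expectation_convex_general (g : ℝ → ℝ)
    (gdiff : Differentiable ℝ g) (gdiff2 : Differentiable ℝ (deriv g))
    (gconv : ConvexOn ℝ Set.univ (deriv (deriv g)))
    (β : ℝ) :
    ConvexOn ℝ (Set.Ioi (0 : ℝ))
      (fun t => (g (β + Real.sqrt t) + g (β - Real.sqrt t)) / 2) := by
  have hφc := continuousOn_univ.mp (gconv.continuousOn isOpen_univ)
  have hderiv : ∀ t ∈ Ioi (0 : ℝ), HasDerivAt (fun t => (g (β + √t) + g (β - √t)) / 2)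
      ((∫ u in (-1 : ℝ)..1, deriv (deriv g) (β + √t * u)) / 4) t := by
    intro t ht
    convert hasDerivAt_sqrt_symmetric_average gdiff β ht using 1
    have : √t ≠ 0 := (sqrt_pos.2 ht).ne'
    rw [sub_eq_mul_integral_deriv_comp_add_mul gdiff2 hφc]
    field_simp
  have hmono : MonotoneOn (fun t => (∫ u in (-1 : ℝ)..1, deriv (deriv g) (β + √t * u)) / 4)
      (Ioi 0) := fun a _ b _ hab =>
    div_le_div_of_nonneg_right (gconv.monotoneOn_integral_comp_add_mul β (sqrt_nonneg a)
      (sqrt_nonneg b) (sqrt_le_sqrt hab)) (by norm_num)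
  exact (convex_Ioi 0).convexOn_of_hasDerivAt_of_monotoneOn isOpen_Ioi hderiv hmono

/-- for `g` even twice differentiable with convex second derivative and a
Rademacher average, `t ↦ E g(β + ε√t) = (g(β+√t) + g(β-√t))/2` is convex on `(0,∞)`. -/
theorem rademacher_expectation_convex (g : ℝ → ℝ)
    (geven : ∀ x, g (-x) = g x)
    (gdiff : Differentiable ℝ g) (gdiff2 : Differentiable ℝ (deriv g))
    (gconv : ConvexOn ℝ Set.univ (deriv (deriv g)))
    (β : ℝ) :
    ConvexOn ℝ (Set.Ioi (0 : ℝ))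
      (fun t => (g (β + Real.sqrt t) + g (β - Real.sqrt t)) / 2) :=
  rademacher_expectation_convex_general g gdiff gdiff2 gconv β
end
end
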